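/- arXiv:2409.18525 — 2 statements merged into one kernel-verified Lean document; each statement's English description precedes it below -/
import Mathlib

section
/- Let Ω ⊆ ℝⁿ be open, ω a weight, and φ ∈ Φ_w(Ω). Then φ satisfies (A2)_ω if and only if there exist an x-independent weak Φ-function φ_∞ : [0,∞) → [0,∞], a nonnegative h ∈ L¹(Ω,ω) ∩ L^∞(Ω), and β ∈ (0,1] such that, for a.e. x ∈ Ω: φ(x,βt) ≤ φ_∞(t) + h(x) whenever φ_∞(t) ∈ [0,1], and φ_∞(βt) ≤ φ(x,t) + h(x) whenever φ(x,t) ∈ [0,1]. -/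
open MeasureTheory Metric Filter Set
open scoped ENNReal NNReal Topology

noncomputable section

/-- `ℝⁿ` with Lebesgue measure. -/
abbrev Rn (n : ℕ) : Type := EuclideanSpace ℝ (Fin n)

/-- The `ω`-measure of a set `E`, `ω(E) = ∫_E ω(x) dx`. -/
def wSet {n : ℕ} (ω : Rn n → ℝ≥0∞) (E : Set (Rn n)) : ℝ≥0∞ := ∫⁻ x in E, ω x

/-- A weight: a measurable, a.e. positive and finite, locally integrable function. -/
def IsWeight {n : ℕ} (ω : Rn n → ℝ≥0∞) : Prop :=
  Measurable ω ∧ (∀ᵐ x ∂(volume : Measure (Rn n)), 0 < ω x ∧ ω x < ∞) ∧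
    ∀ (z : Rn n) (r : ℝ), 0 < r → wSet ω (ball z r) ≠ ∞

/-- The Muckenhoupt class `A_q`, `1 < q < ∞`:
`sup_B |B|^{-q} ω(B) (∫_B ω^{-q'/q})^{q-1} < ∞` where `q'/q = 1/(q-1)`. -/
def MuckenhouptAq {n : ℕ} (q : ℝ) (ω : Rn n → ℝ≥0∞) : Prop :=
  IsWeight ω ∧ ∃ C : ℝ≥0∞, C ≠ ∞ ∧ ∀ (z : Rn n) (r : ℝ), 0 < r →
    (volume (ball z r)) ^ (-q) * wSet ω (ball z r) *
      (∫⁻ y in ball z r, (ω y) ^ (-(1 / (q - 1)))) ^ (q - 1) ≤ C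

/-- The class `A_∞ = ⋃_{1<q<∞} A_q`. -/
def MuckenhouptAinfty {n : ℕ} (ω : Rn n → ℝ≥0∞) : Prop :=
  ∃ q : ℝ, 1 < q ∧ MuckenhouptAq q ω

/-- `(aInc)_p`: `t ↦ φ(x,t)/t^p` is almost increasing, uniformly in a.e. `x ∈ Ω`. -/
def AInc {n : ℕ} (Ω : Set (Rn n)) (φ : Rn n → ℝ≥0∞ → ℝ≥0∞) (p : ℝ) : Prop :=
  ∃ a : ℝ≥0, 1 ≤ a ∧ ∀ᵐ x ∂(volume : Measure (Rn n)), x ∈ Ω →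
    ∀ s t : ℝ≥0, 0 < s → s < t →
      φ x s / (s : ℝ≥0∞) ^ p ≤ a * (φ x t / (t : ℝ≥0∞) ^ p)

/-- A weak Φ-function on `Ω`. -/
structure IsWeakPhi {n : ℕ} (Ω : Set (Rn n)) (φ : Rn n → ℝ≥0∞ → ℝ≥0∞) : Prop where
  meas : ∀ f : Rn n → ℝ≥0∞, Measurable f → Measurable fun x => φ x (f x)
  mono : ∀ᵐ x ∂(volume : Measure (Rn n)), x ∈ Ω → Monotone (φ x)
  map_zero : ∀ᵐ x ∂(volume : Measure (Rn n)), x ∈ Ω → φ x 0 = 0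
  tendsto_zero : ∀ᵐ x ∂(volume : Measure (Rn n)), x ∈ Ω →
    Tendsto (fun t : ℝ≥0 => φ x t) (𝓝[>] 0) (𝓝 0)
  tendsto_top : ∀ᵐ x ∂(volume : Measure (Rn n)), x ∈ Ω →
    Tendsto (fun t : ℝ≥0 => φ x t) atTop (𝓝 ∞)
  aInc_one : AInc Ω φ 1

/-- Condition (A0). -/
def A0 {n : ℕ} (Ω : Set (Rn n)) (φ : Rn n → ℝ≥0∞ → ℝ≥0∞) : Prop :=
  ∃ β₀ : ℝ≥0, 0 < β₀ ∧ β₀ ≤ 1 ∧ ∀ᵐ x ∂(volume : Measure (Rn n)), x ∈ Ω →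
    φ x β₀ ≤ 1 ∧ 1 ≤ φ x ((β₀ : ℝ≥0∞)⁻¹)

/-- Condition (A1)_ω. -/
def A1w {n : ℕ} (Ω : Set (Rn n)) (ω : Rn n → ℝ≥0∞) (φ : Rn n → ℝ≥0∞ → ℝ≥0∞) : Prop :=
  ∃ β₁ : ℝ≥0, 0 < β₁ ∧ β₁ ≤ 1 ∧ ∀ (z : Rn n) (r : ℝ), 0 < r → wSet ω (ball z r) ≤ 1 →
    ∀ᵐ x ∂(volume : Measure (Rn n)), ∀ᵐ y ∂(volume : Measure (Rn n)),
      x ∈ ball z r ∩ Ω → y ∈ ball z r ∩ Ω →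
        ∀ t : ℝ≥0, 1 ≤ φ y t → φ y t ≤ (wSet ω (ball z r))⁻¹ →
          φ x (β₁ * t) ≤ φ y t

/-- `h ∈ L¹(Ω,ω) ∩ L^∞(Ω)`, `h ≥ 0`. -/
def MemL1wLinf {n : ℕ} (Ω : Set (Rn n)) (ω : Rn n → ℝ≥0∞) (h : Rn n → ℝ≥0) : Prop :=
  Measurable h ∧ (∫⁻ x in Ω, (h x : ℝ≥0∞) * ω x) ≠ ∞ ∧
    ∃ C : ℝ≥0, ∀ᵐ x ∂(volume : Measure (Rn n)), x ∈ Ω → h x ≤ C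

/-- Condition (A2)_ω. -/
def A2w {n : ℕ} (Ω : Set (Rn n)) (ω : Rn n → ℝ≥0∞) (φ : Rn n → ℝ≥0∞ → ℝ≥0∞) : Prop :=
  ∀ s : ℝ≥0, 0 < s → ∃ β₂ : ℝ≥0, 0 < β₂ ∧ β₂ ≤ 1 ∧ ∃ h : Rn n → ℝ≥0,
    MemL1wLinf Ω ω h ∧
      ∀ᵐ x ∂(volume : Measure (Rn n)), ∀ᵐ y ∂(volume : Measure (Rn n)),
        x ∈ Ω → y ∈ Ω → ∀ t : ℝ≥0, φ y t ≤ s →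
          φ x (β₂ * t) ≤ φ y t + h x + h y

/-- The weighted modular `ρ_φ^ω(g) = ∫_Ω φ(x, g(x)) ω(x) dx` (applied to `g = |f|`). -/
def wModular {n : ℕ} (Ω : Set (Rn n)) (ω : Rn n → ℝ≥0∞) (φ : Rn n → ℝ≥0∞ → ℝ≥0∞)
    (g : Rn n → ℝ≥0∞) : ℝ≥0∞ := ∫⁻ x in Ω, φ x (g x) * ω x

/-- The weighted Luxemburg norm `‖f‖_{L^φ(Ω,ω)}` (applied to `g = |f|`). -/
def wNorm {n : ℕ} (Ω : Set (Rn n)) (ω : Rn n → ℝ≥0∞) (φ : Rn n → ℝ≥0∞ → ℝ≥0∞)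
    (g : Rn n → ℝ≥0∞) : ℝ≥0∞ :=
  ⨅ (lam : ℝ≥0) (_ : 0 < lam)
    (_ : wModular Ω ω φ (fun x => g x / lam) ≤ 1), (lam : ℝ≥0∞)

/-- Membership in the weighted generalized Orlicz space `L^φ(Ω,ω)` (applied to `g = |f|`). -/
def MemLw {n : ℕ} (Ω : Set (Rn n)) (ω : Rn n → ℝ≥0∞) (φ : Rn n → ℝ≥0∞ → ℝ≥0∞)
    (g : Rn n → ℝ≥0∞) : Prop :=
  ∃ lam : ℝ≥0, 0 < lam ∧ wModular Ω ω φ (fun x => g x / lam) ≤ 1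

/-- The Hardy–Littlewood maximal operator (relative to `Ω`), applied to `g = |f|`. -/
def maximal {n : ℕ} (Ω : Set (Rn n)) (g : Rn n → ℝ≥0∞) (x : Rn n) : ℝ≥0∞ :=
  ⨆ (z : Rn n) (r : ℝ) (_ : 0 < r) (_ : x ∈ ball z r),
    (volume (ball z r))⁻¹ * ∫⁻ y in ball z r ∩ Ω, g y

/-- An `x`-independent weak Φ-function. -/
structure IsWeakPhi0 (ψ : ℝ≥0∞ → ℝ≥0∞) : Prop where
  mono : Monotone ψ
  map_zero : ψ 0 = 0
  tendsto_zero : Tendsto (fun t : ℝ≥0 => ψ t) (𝓝[>] 0) (𝓝 0)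
  tendsto_top : Tendsto (fun t : ℝ≥0 => ψ t) atTop (𝓝 ∞)
  aInc_one : ∃ a : ℝ≥0, 1 ≤ a ∧ ∀ s t : ℝ≥0, 0 < s → s < t →
    ψ s / (s : ℝ≥0∞) ≤ a * (ψ t / (t : ℝ≥0∞))

/-- The real-valued reciprocal `1/p(x)` of an exponent `p : Ω → [1,∞]` (with `1/∞ = 0`). -/
def invExp {n : ℕ} (p : Rn n → ℝ≥0∞) (x : Rn n) : ℝ := ((p x)⁻¹).toReal

/-- Local log-Hölder continuity of `g` on `Ω`. -/
def LocallyLogHolder {n : ℕ} (Ω : Set (Rn n)) (g : Rn n → ℝ) : Prop :=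
  ∃ c : ℝ, 0 < c ∧ ∀ x ∈ Ω, ∀ y ∈ Ω,
    |g x - g y| ≤ c / Real.log (Real.exp 1 + 1 / dist x y)

/-- The log-Hölder decay condition for `g` with limit `g∞`. -/
def LogHolderDecay {n : ℕ} (Ω : Set (Rn n)) (g : Rn n → ℝ) (ginf : ℝ) : Prop :=
  ∃ c : ℝ, 0 < c ∧ ∀ x ∈ Ω, |g x - ginf| ≤ c / Real.log (Real.exp 1 + ‖x‖)

/-- `1/p ∈ P^log(Ω)`: local log-Hölder continuity plus log-Hölder decay. -/
def PLog {n : ℕ} (Ω : Set (Rn n)) (p : Rn n → ℝ≥0∞) : Prop :=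
  LocallyLogHolder Ω (invExp p) ∧
    ∃ pinf : ℝ≥0∞, 1 ≤ pinf ∧ LogHolderDecay Ω (invExp p) ((pinf)⁻¹).toReal

/-- The variable exponent Φ-function `φ(x,t) = t^{p(x)}`, with
`t^∞ := ∞·χ_{(1,∞)}(t)`. -/
def varExp {n : ℕ} (p : Rn n → ℝ≥0∞) (x : Rn n) (t : ℝ≥0∞) : ℝ≥0∞ :=
  if p x = ∞ then (if t ≤ 1 then 0 else ∞) else t ^ (p x).toReal

/-- The double phase functional `φ(x,t) = t^p + a(x) t^q`. -/
def doublePhase {n : ℕ} (a : Rn n → ℝ) (p q : ℝ) (x : Rn n) (t : ℝ≥0∞) : ℝ≥0∞ :=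
  t ^ p + ENNReal.ofReal (a x) * t ^ q


/-!
`⇒`: apply `(A2)_ω` with `s = 2` and put `φ_∞ := limsup_j φ(x_j, ·)` along reference points `x_j`
at which the `(A2)_ω` inequality holds against almost every other point, in both orders (Fubini).
If `h` is essentially small somewhere, take `h(x_j) → 0`; comparing `φ_∞` with `φ(y, ·)` at points
where `h(y)` is small then gives `φ_∞(0⁺) = 0`. Otherwise `h ≥ ε` on `Ω`, and the constant sequence
`x_j = x₀` works after replacing `h` by `h + h(x₀)`, which stays in `L¹(Ω, ω)`.

`⇐`: if `φ(y, t) ≤ s`, then `(aInc)₁` gives `φ(y, t/K) ≤ 1`; pass to `φ_∞`, rescale once more so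
that `φ_∞ ≤ 1`, and come back to `φ(x, ·)`.
-/

theorem ENNReal.limsup_add_le_of_tendsto {ι : Type*} {l : Filter ι} [l.NeBot] {u v : ι → ℝ≥0∞}
    {c : ℝ≥0∞} (hc : c ≠ ∞) (hv : Tendsto v l (𝓝 c)) :
    limsup (fun j => u j + v j) l ≤ limsup u l + c := by
  have hvc : Tendsto (fun j => v j - c) l (𝓝 0) := by
    simpa using ENNReal.Tendsto.sub hv tendsto_const_nhds (Or.inr hc)
  calc limsup (fun j => u j + v j) l ≤ limsup ((fun j => u j + c) + fun j => v j - c) l :=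
        limsup_le_limsup (Eventually.of_forall fun j => by
          simp only [Pi.add_apply, add_assoc]; gcongr; exact le_add_tsub)
    _ = limsup u l + c := by
        rw [ENNReal.limsup_add_of_right_tendsto_zero hvc,
          limsup_add_const _ _ _ (by isBoundedDefault) (by isBoundedDefault)]

theorem exists_rat_toNNReal_mem_Icc (t : ℝ≥0) :
    ∃ q : ℚ, t / 2 ≤ Real.toNNReal q ∧ Real.toNNReal q ≤ t := by
  rcases eq_zero_or_pos t with rfl | ht
  · exact ⟨0, by simp⟩
  obtain ⟨q, -, hq1, hq2⟩ := (NNReal.lt_iff_exists_rat_btwn _ _).1 (half_lt_self ht)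
  exact ⟨q, hq1.le, hq2.le⟩

def AIncOne (a : ℝ≥0) (f : ℝ≥0∞ → ℝ≥0∞) : Prop :=
  ∀ s t : ℝ≥0, 0 < s → s < t → f s / s ≤ a * (f t / t)

namespace AIncOne

variable {a : ℝ≥0} {f : ℝ≥0∞ → ℝ≥0∞}

theorem iff_le_mul : AIncOne a f ↔ ∀ s t : ℝ≥0, 0 < s → s < t → f s ≤ a * s / t * f t := by
  refine forall₄_congr fun s t hs _ => ?_
  rw [ENNReal.div_le_iff (by exact_mod_cast hs.ne') ENNReal.coe_ne_top]
  simp only [div_eq_mul_inv]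
  ring_nf

theorem apply_mul_le (hf : AIncOne a f) (ha : 1 ≤ a) {s K : ℝ≥0} (hs : 0 < s) (hK : 1 ≤ K) :
    f s * K ≤ a * f ↑(K * s) := by
  rcases hK.eq_or_lt with rfl | hK
  · simpa using mul_le_mul_left (ENNReal.coe_le_coe.2 ha) (f s)
  have hs' : (s : ℝ≥0∞) ≠ 0 := by exact_mod_cast hs.ne'
  have hKs : ((K * s : ℝ≥0) : ℝ≥0∞) ≠ 0 := by exact_mod_cast (mul_pos (one_pos.trans hK) hs).ne'
  calc f s * K = f s / s * ↑(K * s) := by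
        rw [ENNReal.coe_mul, mul_comm (K : ℝ≥0∞), ← mul_assoc,
          ENNReal.div_mul_cancel hs' ENNReal.coe_ne_top]
    _ ≤ a * (f ↑(K * s) / ↑(K * s)) * ↑(K * s) := by
        gcongr
        exact hf s (K * s) hs (lt_mul_of_one_lt_left hs hK)
    _ = a * f ↑(K * s) := by rw [mul_assoc, ENNReal.div_mul_cancel hKs ENNReal.coe_ne_top]

theorem apply_div_le_one (hf : AIncOne a f) (ha : 1 ≤ a) (h0 : f 0 = 0) {s t : ℝ≥0}
    (ht : f t ≤ s) : f ↑(t / (a * s + 1)) ≤ 1 := by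
  rcases eq_zero_or_pos t with rfl | ht0
  · simp [h0]
  set K := a * s + 1
  have hK : 1 ≤ K := le_add_self
  have hK0 : (K : ℝ≥0∞) ≠ 0 := by exact_mod_cast (one_pos.trans_le hK).ne'
  rw [← ENNReal.mul_le_mul_iff_left hK0 ENNReal.coe_ne_top, one_mul]
  calc f ↑(t / K) * K ≤ a * f ↑(K * (t / K)) :=
        hf.apply_mul_le ha (div_pos ht0 (one_pos.trans_le hK)) hK
    _ = a * f t := by rw [mul_div_cancel₀ _ (one_pos.trans_le hK).ne']
    _ ≤ a * s := by gcongr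
    _ ≤ K := by exact_mod_cast le_self_add

theorem tendsto_atTop (hf : AIncOne a f) (ha : 1 ≤ a) {T : ℝ≥0} (hT : 0 < T) (hfT : f T ≠ 0) :
    Tendsto (fun t : ℝ≥0 => f t) atTop (𝓝 ∞) := by
  have hlin : Tendsto (fun t : ℝ≥0 => f T * ↑(t / T) / a) atTop (𝓝 ∞) := by
    have h := ENNReal.Tendsto.div_const (ENNReal.Tendsto.const_mul (a := f T)
      (ENNReal.tendsto_coe_nhds_top.2 (tendsto_id.atTop_div_const hT)) (Or.inl ENNReal.top_ne_zero))
      (Or.inr (by exact_mod_cast (one_pos.trans_le ha).ne')) (b := a)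
    rwa [ENNReal.mul_top hfT, ENNReal.top_div_of_ne_top ENNReal.coe_ne_top] at h
  refine tendsto_nhds_top_mono hlin ((eventually_ge_atTop T).mono fun t htT => ?_)
  refine ENNReal.div_le_of_le_mul' ?_
  calc f T * ↑(t / T) ≤ a * f ↑(t / T * T) := hf.apply_mul_le ha hT ((one_le_div hT).2 htT)
    _ = a * f t := by rw [div_mul_cancel₀ _ hT.ne']

end AIncOne

theorem isWeakPhi0_id : IsWeakPhi0 id where
  mono := monotone_id
  map_zero := rfl
  tendsto_zero := (ENNReal.continuous_coe.tendsto' 0 0 ENNReal.coe_zero).mono_left nhdsWithin_le_nhds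
  tendsto_top := ENNReal.tendsto_coe_nhds_top.2 tendsto_id
  aInc_one := ⟨1, le_rfl, fun s t hs hst => by
    rw [id, id, ENNReal.div_self (by exact_mod_cast hs.ne') ENNReal.coe_ne_top,
      ENNReal.div_self (by exact_mod_cast (hs.trans hst).ne') ENNReal.coe_ne_top, mul_one]
    exact le_rfl⟩

def IsComparable (ψ : ℝ≥0∞ → ℝ≥0∞) (β e : ℝ≥0) (f : ℝ≥0∞ → ℝ≥0∞) : Prop :=
  ∀ t : ℝ≥0, (ψ t ≤ 1 → f (β * t) ≤ ψ t + e) ∧ (f t ≤ 1 → ψ (β * t) ≤ f t + e)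

/-- Dividing `t` by `a s + 1` brings `g` below `1`, and dividing once more by `a' (1 + C) + 1`
brings `ψ` below `1`. -/
theorem IsComparable.apply_le_add {ψ f g : ℝ≥0∞ → ℝ≥0∞} {a a' β ex ey C s t : ℝ≥0}
    (hf : IsComparable ψ β ex f) (hg : IsComparable ψ β ey g)
    (hψm : Monotone ψ) (hψ0 : ψ 0 = 0) (hψa : AIncOne a' ψ) (ha' : 1 ≤ a')
    (hgm : Monotone g) (hg0 : g 0 = 0) (hga : AIncOne a g) (ha : 1 ≤ a) (hey : ey ≤ C)
    (ht : g t ≤ s) :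
    f (↑(β * β / ((a * s + 1) * (a' * (1 + C) + 1))) * t) ≤ g t + ex + ey := by
  set K := a * s + 1
  set K' := a' * (1 + C) + 1
  have hgK : g ↑(t / K) ≤ 1 := hga.apply_div_le_one ha hg0 ht
  have hψK : ψ ↑(β * (t / K)) ≤ g ↑(t / K) + ey := by
    simpa only [ENNReal.coe_mul] using (hg (t / K)).2 hgK
  have hψK' : ψ ↑(β * (t / K) / K') ≤ 1 := by
    refine hψa.apply_div_le_one ha' hψ0 (hψK.trans ?_)
    push_cast
    gcongr
  calc f (↑(β * β / (K * K')) * t) = f (β * ↑(β * (t / K) / K')) := by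
        rw [← ENNReal.coe_mul, ← ENNReal.coe_mul]
        congr 2
        simp only [div_eq_mul_inv, mul_inv]
        ring
    _ ≤ ψ ↑(β * (t / K) / K') + ex := (hf _).1 hψK'
    _ ≤ ψ ↑(β * (t / K)) + ex := by
        gcongr
        exact hψm (ENNReal.coe_le_coe.2 (div_le_self zero_le le_add_self))
    _ ≤ g ↑(t / K) + ey + ex := by gcongr
    _ ≤ g t + ex + ey := by
        rw [add_right_comm]
        gcongr
        exact hgm (ENNReal.coe_le_coe.2 (div_le_self zero_le le_add_self))

section General

variable {α : Type*} {φ : α → ℝ≥0∞ → ℝ≥0∞} {a s β : ℝ≥0} {h : α → ℝ≥0}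

def A2Ineq (φ : α → ℝ≥0∞ → ℝ≥0∞) (s β : ℝ≥0) (h : α → ℝ≥0) (x y : α) (t : ℝ≥0) : Prop :=
  φ y t ≤ s → φ x (β * t) ≤ φ y t + h x + h y

theorem A2Ineq.of_le {β' : ℝ≥0} {x y : α} {t : ℝ≥0} (hβ : β' ≤ β) (hx : Monotone (φ x))
    (H : A2Ineq φ s β h x y t) : A2Ineq φ s β' h x y t :=
  fun hy => (hx (by gcongr)).trans (H hy)

def limsupSeq (φ : α → ℝ≥0∞ → ℝ≥0∞) (X : ℕ → α) (u : ℝ≥0∞) : ℝ≥0∞ :=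
  limsup (fun j => φ (X j) u) atTop

section limsupSeq

variable {X : ℕ → α}

theorem monotone_limsupSeq (hX : ∀ j, Monotone (φ (X j))) : Monotone (limsupSeq φ X) :=
  fun _ _ huv => limsup_le_limsup (Eventually.of_forall fun j => hX j huv)

theorem limsupSeq_zero (hX : ∀ j, φ (X j) 0 = 0) : limsupSeq φ X 0 = 0 := by
  simp [limsupSeq, hX]

theorem aIncOne_limsupSeq (hX : ∀ j, AIncOne a (φ (X j))) : AIncOne a (limsupSeq φ X) := by
  refine AIncOne.iff_le_mul.2 fun u v hu huv => ?_
  calc limsupSeq φ X u ≤ limsup (fun j => a * u / v * φ (X j) v) atTop :=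
        limsup_le_limsup (Eventually.of_forall fun j => AIncOne.iff_le_mul.1 (hX j) u v hu huv)
    _ = a * u / v * limsupSeq φ X v := ENNReal.limsup_const_mul_of_ne_top
        (ENNReal.div_ne_top (ENNReal.mul_ne_top ENNReal.coe_ne_top ENNReal.coe_ne_top)
          (by exact_mod_cast (hu.trans huv).ne'))

end limsupSeq

variable [MeasurableSpace α] {μ : Measure α}

structure AEWeakPhi (μ : Measure α) (a : ℝ≥0) (φ : α → ℝ≥0∞ → ℝ≥0∞) : Prop where
  measurable : ∀ c, Measurable fun x => φ x c
  mono : ∀ᵐ x ∂μ, Monotone (φ x)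
  map_zero : ∀ᵐ x ∂μ, φ x 0 = 0
  tendsto_zero : ∀ᵐ x ∂μ, Tendsto (fun t : ℝ≥0 => φ x t) (𝓝[>] 0) (𝓝 0)
  tendsto_top : ∀ᵐ x ∂μ, Tendsto (fun t : ℝ≥0 => φ x t) atTop (𝓝 ∞)
  one_le : 1 ≤ a
  aInc : ∀ᵐ x ∂μ, AIncOne a (φ x)

theorem measurableSet_A2Ineq (hφ : ∀ c, Measurable fun x => φ x c) (hh : Measurable h)
    (t : ℝ≥0) : MeasurableSet {p : α × α | A2Ineq φ s β h p.1 p.2 t} := by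
  have hh' : Measurable fun x => (h x : ℝ≥0∞) := measurable_coe_nnreal_ennreal.comp hh
  refine MeasurableSet.imp (measurableSet_le ((hφ _).comp measurable_snd) measurable_const)
    (measurableSet_le ((hφ _).comp measurable_fst) ?_)
  exact (((hφ _).comp measurable_snd).add (hh'.comp measurable_fst)).add (hh'.comp measurable_snd)

/-- Fubini swaps the two a.e. quantifiers for each fixed `t`; halving `β` then passes from
rational `t` to all `t` by monotonicity. -/
theorem ae_ae_A2Ineq_swap [SFinite μ] (hφ : AEWeakPhi μ a φ) (hh : Measurable h)
    (H : ∀ᵐ x ∂μ, ∀ᵐ y ∂μ, ∀ t, A2Ineq φ s β h x y t) :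
    ∀ᵐ y ∂μ, ∀ᵐ x ∂μ, ∀ t, A2Ineq φ s (β / 2) h x y t := by
  have hrat : ∀ᵐ y ∂μ, ∀ᵐ x ∂μ, ∀ q : ℚ, A2Ineq φ s β h x y (Real.toNNReal q) := by
    have hq : ∀ q : ℚ, ∀ᵐ y ∂μ, ∀ᵐ x ∂μ, A2Ineq φ s β h x y (Real.toNNReal q) := fun q => by
      rw [← Measure.ae_ae_comm (measurableSet_A2Ineq hφ.measurable hh _)]
      exact H.mono fun x hx => hx.mono fun y hy => hy _
    exact (ae_all_iff.2 hq).mono fun y hy => ae_all_iff.2 hy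
  filter_upwards [hrat, hφ.mono] with y hy hmy
  filter_upwards [hy, hφ.mono] with x hx hmx t hyt
  obtain ⟨q, hq1, hq2⟩ := exists_rat_toNNReal_mem_Icc t
  have hyq : φ y (Real.toNNReal q) ≤ φ y t := hmy (by exact_mod_cast hq2)
  calc φ x (↑(β / 2) * t) ≤ φ x (β * Real.toNNReal q) := by
        refine hmx ?_
        rw [← ENNReal.coe_mul, ← ENNReal.coe_mul, ENNReal.coe_le_coe, div_mul_comm, mul_comm β]
        gcongr
    _ ≤ φ y (Real.toNNReal q) + h x + h y := hx q (hyq.trans hyt)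
    _ ≤ φ y t + h x + h y := by gcongr

structure IsRefPoint (μ : Measure α) (φ : α → ℝ≥0∞ → ℝ≥0∞) (s β : ℝ≥0) (h : α → ℝ≥0)
    (a : ℝ≥0) (z : α) : Prop where
  mono : Monotone (φ z)
  map_zero : φ z 0 = 0
  aInc : AIncOne a (φ z)
  ae_left : ∀ᵐ y ∂μ, ∀ t, A2Ineq φ s β h z y t
  ae_right : ∀ᵐ x ∂μ, ∀ t, A2Ineq φ s β h x z t

theorem AEWeakPhi.ae_isRefPoint [SFinite μ] (hφ : AEWeakPhi μ a φ) (hh : Measurable h)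
    (H : ∀ᵐ x ∂μ, ∀ᵐ y ∂μ, ∀ t, A2Ineq φ s β h x y t) :
    ∀ᵐ z ∂μ, IsRefPoint μ φ s (β / 2) h a z := by
  have hleft : ∀ᵐ x ∂μ, ∀ᵐ y ∂μ, ∀ t, A2Ineq φ s (β / 2) h x y t := by
    filter_upwards [H, hφ.mono] with x hx hmx
    exact hx.mono fun y hy t => (hy t).of_le (half_le_self zero_le) hmx
  filter_upwards [hφ.mono, hφ.map_zero, hφ.aInc, hleft, ae_ae_A2Ineq_swap hφ hh H]
    with z hm h0 ha hl hr
  exact ⟨hm, h0, ha, hl, hr⟩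

section limsupSeq

variable {X : ℕ → α}

theorem ae_apply_le_limsupSeq_add (hX : ∀ j, IsRefPoint μ φ s β h a (X j)) {c : ℝ≥0}
    (hc : Tendsto (fun j => h (X j)) atTop (𝓝 c)) :
    ∀ᵐ x ∂μ, ∀ t : ℝ≥0, limsupSeq φ X t < s →
      φ x (β * t) ≤ limsupSeq φ X t + ↑(h x + c) := by
  filter_upwards [ae_all_iff.2 fun j => (hX j).ae_right] with x hx t ht
  have hle : ∀ᶠ j in atTop, φ x (β * t) ≤ φ (X j) t + ↑(h x + h (X j)) :=
    (eventually_lt_of_limsup_lt ht).mono fun j hj => by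
      simpa only [ENNReal.coe_add, add_assoc] using hx j t hj.le
  calc φ x (β * t) ≤ limsup (fun j => φ (X j) t + ↑(h x + h (X j))) atTop :=
        le_limsup_of_frequently_le hle.frequently
    _ ≤ limsupSeq φ X t + ↑(h x + c) :=
        ENNReal.limsup_add_le_of_tendsto ENNReal.coe_ne_top
          (ENNReal.tendsto_coe.2 (hc.const_add (h x)))

theorem ae_limsupSeq_le_add (hX : ∀ j, IsRefPoint μ φ s β h a (X j)) {c : ℝ≥0}
    (hc : Tendsto (fun j => h (X j)) atTop (𝓝 c)) :
    ∀ᵐ x ∂μ, ∀ t : ℝ≥0, φ x t ≤ s → limsupSeq φ X (β * t) ≤ φ x t + ↑(h x + c) := by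
  filter_upwards [ae_all_iff.2 fun j => (hX j).ae_left] with x hx t ht
  calc limsupSeq φ X (β * t) ≤ limsup (fun j => φ x t + ↑(h x + h (X j))) atTop :=
        limsup_le_limsup (Eventually.of_forall fun j => (hx j t ht).trans_eq (by push_cast; ring))
    _ = φ x t + ↑(h x + c) :=
        (tendsto_const_nhds.add (ENNReal.tendsto_coe.2 (hc.const_add (h x)))).limsup_eq

theorem ae_isComparable_limsupSeq (hs : 1 < s) (hX : ∀ j, IsRefPoint μ φ s β h a (X j))
    {c : ℝ≥0} (hc : Tendsto (fun j => h (X j)) atTop (𝓝 c)) :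
    ∀ᵐ x ∂μ, IsComparable (limsupSeq φ X) β (h x + c) (φ x) := by
  have hs' : (1 : ℝ≥0∞) < s := by exact_mod_cast hs
  filter_upwards [ae_apply_le_limsupSeq_add hX hc, ae_limsupSeq_le_add hX hc] with x h1 h2 t
  exact ⟨fun ht => h1 t (ht.trans_lt hs'), fun ht => h2 t (ht.trans hs'.le)⟩

/-- Comparing with one point `x` at which `φ x` blows up keeps the limit above `s` eventually;
`(aInc)₁` then forces growth to `∞`. -/
theorem tendsto_limsupSeq_atTop (hβ : 0 < β) (ha : 1 ≤ a) (hs : 0 < s)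
    (hX : ∀ j, IsRefPoint μ φ s β h a (X j)) {c : ℝ≥0}
    (hc : Tendsto (fun j => h (X j)) atTop (𝓝 c))
    (htop : ∃ᵐ x ∂μ, Tendsto (fun t : ℝ≥0 => φ x t) atTop (𝓝 ∞)) :
    Tendsto (fun t : ℝ≥0 => limsupSeq φ X t) atTop (𝓝 ∞) := by
  obtain ⟨x, hxtop, hx⟩ := (htop.and_eventually (ae_apply_le_limsupSeq_add hX hc)).exists
  have hxβ : Tendsto (fun t : ℝ≥0 => φ x (β * t)) atTop (𝓝 ∞) := by
    simpa only [Function.comp_def, id, ENNReal.coe_mul] using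
      hxtop.comp (tendsto_id.const_mul_atTop hβ)
  have hge : ∀ᶠ t : ℝ≥0 in atTop, (s : ℝ≥0∞) ≤ limsupSeq φ X t := by
    filter_upwards [hxβ.eventually (lt_mem_nhds (ENNReal.coe_lt_top (r := s + (h x + c))))]
      with t ht
    by_contra! hlt
    refine (hx t hlt).not_gt (lt_of_le_of_lt ?_ ht)
    rw [ENNReal.coe_add s]
    gcongr
  obtain ⟨T, hT, hT0⟩ := (hge.and (eventually_gt_atTop 0)).exists
  exact (aIncOne_limsupSeq fun j => (hX j).aInc).tendsto_atTop ha hT0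
    ((ENNReal.coe_pos.2 hs).trans_le hT).ne'

theorem isWeakPhi0_limsupSeq (hβ : 0 < β) (ha : 1 ≤ a) (hs : 0 < s)
    (hX : ∀ j, IsRefPoint μ φ s β h a (X j)) {c : ℝ≥0}
    (hc : Tendsto (fun j => h (X j)) atTop (𝓝 c))
    (htop : ∃ᵐ x ∂μ, Tendsto (fun t : ℝ≥0 => φ x t) atTop (𝓝 ∞))
    (hzero : Tendsto (fun t : ℝ≥0 => limsupSeq φ X t) (𝓝[>] 0) (𝓝 0)) :
    IsWeakPhi0 (limsupSeq φ X) :=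
  ⟨monotone_limsupSeq fun j => (hX j).mono, limsupSeq_zero fun j => (hX j).map_zero, hzero,
    tendsto_limsupSeq_atTop hβ ha hs hX hc htop, a, ha, aIncOne_limsupSeq fun j => (hX j).aInc⟩

theorem tendsto_limsupSeq_nhdsGT_zero (hβ : 0 < β) (hs : 0 < s)
    (hX : ∀ j, IsRefPoint μ φ s β h a (X j)) (hc : Tendsto (fun j => h (X j)) atTop (𝓝 0))
    (htz : ∀ᵐ y ∂μ, Tendsto (fun t : ℝ≥0 => φ y t) (𝓝[>] 0) (𝓝 0))
    (hsmall : ∀ ε : ℝ≥0, 0 < ε → ∃ᵐ y ∂μ, h y < ε) :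
    Tendsto (fun t : ℝ≥0 => limsupSeq φ X t) (𝓝[>] 0) (𝓝 0) := by
  refine ENNReal.tendsto_nhds_zero.2 fun ε hε => ?_
  obtain ⟨e, he0, heε⟩ := ENNReal.lt_iff_exists_nnreal_btwn.1 hε
  have he0 : 0 < e := ENNReal.coe_pos.1 he0
  obtain ⟨y, hhy, hy, hytz⟩ :=
    ((hsmall (e / 2) (half_pos he0)).and_eventually ((ae_limsupSeq_le_add hX hc).and htz)).exists
  have hev : ∀ᶠ t : ℝ≥0 in 𝓝[>] 0, φ y t ≤ ↑(min (e / 2) s) :=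
    ENNReal.tendsto_nhds_zero.1 hytz _ (ENNReal.coe_pos.2 (lt_min (half_pos he0) hs))
  obtain ⟨t, ht, ht0⟩ := (hev.and self_mem_nhdsWithin).exists
  filter_upwards [Ioo_mem_nhdsGT (mul_pos hβ ht0)] with u hu
  calc limsupSeq φ X u ≤ limsupSeq φ X (β * t) :=
        monotone_limsupSeq (fun j => (hX j).mono) (by exact_mod_cast hu.2.le)
    _ ≤ φ y t + ↑(h y + 0) := hy t (ht.trans (by exact_mod_cast min_le_right _ _))
    _ ≤ ↑(e / 2) + ↑(e / 2) := by
        rw [add_zero]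
        gcongr
        exact ht.trans (by exact_mod_cast min_le_left _ _)
    _ = e := by rw [← ENNReal.coe_add, add_halves]
    _ ≤ ε := heε.le

end limsupSeq

theorem exists_isComparable_of_frequently_lt (hφ : AEWeakPhi μ a φ) (hβ : 0 < β) (hs : 1 < s)
    (hRef : ∀ᵐ z ∂μ, IsRefPoint μ φ s β h a z)
    (hsmall : ∀ ε : ℝ≥0, 0 < ε → ∃ᵐ y ∂μ, h y < ε) :
    ∃ ψ, IsWeakPhi0 ψ ∧ ∀ᵐ x ∂μ, IsComparable ψ β (h x) (φ x) := by
  obtain ⟨u, -, hu0, hu⟩ := exists_seq_strictAnti_tendsto (0 : ℝ≥0)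
  choose X hX hXu using fun j => ((hsmall _ (hu0 j)).and_eventually hRef).exists.imp
    fun _ hz => And.intro hz.2 hz.1
  have hc : Tendsto (fun j => h (X j)) atTop (𝓝 0) :=
    tendsto_of_tendsto_of_tendsto_of_le_of_le tendsto_const_nhds hu (fun _ => zero_le)
      fun j => (hXu j).le
  have htop := ((hsmall 1 one_pos).and_eventually hφ.tendsto_top).mono fun _ hx => hx.2
  have hs0 : 0 < s := one_pos.trans hs
  exact ⟨limsupSeq φ X, isWeakPhi0_limsupSeq hβ hφ.one_le hs0 hX hc htop
    (tendsto_limsupSeq_nhdsGT_zero hβ hs0 hX hc hφ.tendsto_zero hsmall),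
    by simpa only [add_zero] using ae_isComparable_limsupSeq hs hX hc⟩

theorem exists_isComparable_add_const (hφ : AEWeakPhi μ a φ) (hβ : 0 < β) (hs : 1 < s)
    (hRef : ∀ᵐ z ∂μ, IsRefPoint μ φ s β h a z) (hμ : μ ≠ 0) :
    ∃ ψ, IsWeakPhi0 ψ ∧ ∃ c : ℝ≥0, ∀ᵐ x ∂μ, IsComparable ψ β (h x + c) (φ x) := by
  have := ae_neBot.2 hμ
  obtain ⟨x₀, hx₀, hx₀z⟩ := (hRef.and hφ.tendsto_zero).exists
  have hX : ∀ _ : ℕ, IsRefPoint μ φ s β h a x₀ := fun _ => hx₀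
  have hzero : Tendsto (fun t : ℝ≥0 => limsupSeq φ (fun _ => x₀) t) (𝓝[>] 0) (𝓝 0) := by
    simpa only [limsupSeq, limsup_const] using hx₀z
  exact ⟨_, isWeakPhi0_limsupSeq hβ hφ.one_le (one_pos.trans hs) hX tendsto_const_nhds
    hφ.tendsto_top.frequently hzero, h x₀, ae_isComparable_limsupSeq hs hX tendsto_const_nhds⟩

theorem exists_ae_ae_A2Ineq_of_ae_isComparable {ψ : ℝ≥0∞ → ℝ≥0∞} {a' C : ℝ≥0}
    (hφ : AEWeakPhi μ a φ) (hψ : IsWeakPhi0 ψ) (hψa : AIncOne a' ψ) (ha' : 1 ≤ a')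
    (hC : ∀ᵐ x ∂μ, h x ≤ C) (hβ0 : 0 < β) (hβ1 : β ≤ 1)
    (H : ∀ᵐ x ∂μ, IsComparable ψ β (h x) (φ x)) (s : ℝ≥0) :
    ∃ β₂ : ℝ≥0, 0 < β₂ ∧ β₂ ≤ 1 ∧ ∀ᵐ x ∂μ, ∀ᵐ y ∂μ, ∀ t, A2Ineq φ s β₂ h x y t := by
  have hK : 1 ≤ (a * s + 1) * (a' * (1 + C) + 1) := one_le_mul le_add_self le_add_self
  refine ⟨β * β / ((a * s + 1) * (a' * (1 + C) + 1)), by positivity,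
    div_le_one_of_le₀ ((mul_le_one' hβ1 hβ1).trans hK) zero_le, ?_⟩
  filter_upwards [H] with x hx
  filter_upwards [H, hφ.mono, hφ.map_zero, hφ.aInc, hC] with y hy hym hy0 hya hyC t ht
  exact hx.apply_le_add hy hψ.mono hψ.map_zero hψa ha' hym hy0 hya hφ.one_le hyC ht

end General

section WeightedOrlicz

variable {n : ℕ} {Ω : Set (Rn n)} {ω : Rn n → ℝ≥0∞} {φ : Rn n → ℝ≥0∞ → ℝ≥0∞}

theorem IsWeakPhi.aeWeakPhi_restrict (hφ : IsWeakPhi Ω φ) (hΩ : MeasurableSet Ω) :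
    ∃ a, AEWeakPhi (volume.restrict Ω) a φ := by
  obtain ⟨a, ha, hinc⟩ := hφ.aInc_one
  refine ⟨a, fun c => hφ.meas _ measurable_const, (ae_restrict_iff' hΩ).2 hφ.mono,
    (ae_restrict_iff' hΩ).2 hφ.map_zero, (ae_restrict_iff' hΩ).2 hφ.tendsto_zero,
    (ae_restrict_iff' hΩ).2 hφ.tendsto_top, ha, (ae_restrict_iff' hΩ).2 ?_⟩
  filter_upwards [hinc] with x hx hxΩ s t hs hst
  simpa only [ENNReal.rpow_one] using hx hxΩ s t hs hst

theorem a2w_iff_ae_restrict (hΩ : MeasurableSet Ω) :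
    A2w Ω ω φ ↔ ∀ s : ℝ≥0, 0 < s → ∃ β : ℝ≥0, 0 < β ∧ β ≤ 1 ∧ ∃ h : Rn n → ℝ≥0,
      MemL1wLinf Ω ω h ∧ ∀ᵐ x ∂volume.restrict Ω, ∀ᵐ y ∂volume.restrict Ω, ∀ t,
        A2Ineq φ s β h x y t := by
  simp only [A2w, A2Ineq, ae_restrict_iff' hΩ, eventually_imp_distrib_left]

theorem MemL1wLinf.zero : MemL1wLinf Ω ω 0 :=
  ⟨measurable_const, by simp, 0, by simp⟩

/-- Since `h ≥ ε` on `Ω`, the constant `c` is absorbed as `h + c ≤ (1 + c / ε) h`. -/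
theorem MemL1wLinf.add_const {h : Rn n → ℝ≥0} (hh : MemL1wLinf Ω ω h) {ε : ℝ≥0} (hε : 0 < ε)
    (hlow : ∀ᵐ x ∂volume.restrict Ω, ε ≤ h x) (c : ℝ≥0) :
    MemL1wLinf Ω ω fun x => h x + c := by
  obtain ⟨hm, hint, C, hC⟩ := hh
  refine ⟨hm.add_const c, ?_, C + c, hC.mono fun x hx hxΩ => by simpa using hx hxΩ⟩
  have hle : ∀ᵐ x ∂volume.restrict Ω,
      ((h x + c : ℝ≥0) : ℝ≥0∞) * ω x ≤ ↑(1 + c / ε) * (h x * ω x) := by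
    filter_upwards [hlow] with x hx
    rw [← mul_assoc, ← ENNReal.coe_mul]
    gcongr
    rw [add_mul, one_mul]
    gcongr
    calc c = c / ε * ε := (div_mul_cancel₀ c hε.ne').symm
      _ ≤ c / ε * h x := by gcongr
  exact ne_top_of_le_ne_top (ENNReal.mul_ne_top ENNReal.coe_ne_top hint)
    ((lintegral_mono_ae hle).trans (lintegral_const_mul' _ _ ENNReal.coe_ne_top).le)

theorem exists_isComparable_of_a2w (hΩ : MeasurableSet Ω) (hφ : IsWeakPhi Ω φ)
    (hA : A2w Ω ω φ) :
    ∃ ψ, IsWeakPhi0 ψ ∧ ∃ h, MemL1wLinf Ω ω h ∧ ∃ β : ℝ≥0, 0 < β ∧ β ≤ 1 ∧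
      ∀ᵐ x ∂volume.restrict Ω, IsComparable ψ β (h x) (φ x) := by
  obtain ⟨β, hβ0, hβ1, h, hh, H⟩ := (a2w_iff_ae_restrict hΩ).1 hA 2 two_pos
  obtain ⟨a, hφ'⟩ := hφ.aeWeakPhi_restrict hΩ
  have hRef := hφ'.ae_isRefPoint hh.1 H
  have hβ0' : 0 < β / 2 := half_pos hβ0
  have hβ1' : β / 2 ≤ 1 := (half_le_self zero_le).trans hβ1
  rcases eq_or_ne (volume.restrict Ω) 0 with hμ | hμ
  · exact ⟨id, isWeakPhi0_id, 0, .zero, 1, one_pos, le_rfl, by simp [hμ]⟩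
  by_cases hsmall : ∀ ε : ℝ≥0, 0 < ε → ∃ᵐ y ∂volume.restrict Ω, h y < ε
  · obtain ⟨ψ, hψ, hcomp⟩ := exists_isComparable_of_frequently_lt hφ' hβ0' one_lt_two hRef hsmall
    exact ⟨ψ, hψ, h, hh, β / 2, hβ0', hβ1', hcomp⟩
  · simp only [not_forall, not_frequently, not_lt] at hsmall
    obtain ⟨ε, hε, hlow⟩ := hsmall
    obtain ⟨ψ, hψ, c, hcomp⟩ := exists_isComparable_add_const hφ' hβ0' one_lt_two hRef hμ
    exact ⟨ψ, hψ, _, hh.add_const hε hlow c, β / 2, hβ0', hβ1', hcomp⟩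

theorem a2w_of_isComparable (hΩ : MeasurableSet Ω) (hφ : IsWeakPhi Ω φ)
    {ψ : ℝ≥0∞ → ℝ≥0∞} (hψ : IsWeakPhi0 ψ) {h : Rn n → ℝ≥0} (hh : MemL1wLinf Ω ω h)
    {β : ℝ≥0} (hβ0 : 0 < β) (hβ1 : β ≤ 1)
    (H : ∀ᵐ x ∂volume.restrict Ω, IsComparable ψ β (h x) (φ x)) : A2w Ω ω φ := by
  obtain ⟨a, hφ'⟩ := hφ.aeWeakPhi_restrict hΩ
  obtain ⟨a', ha', hψa⟩ := hψ.aInc_one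
  obtain ⟨C, hC⟩ := hh.2.2
  refine (a2w_iff_ae_restrict hΩ).2 fun s _ => ?_
  obtain ⟨β₂, hβ₂0, hβ₂1, H₂⟩ := exists_ae_ae_A2Ineq_of_ae_isComparable hφ' hψ hψa ha'
    ((ae_restrict_iff' hΩ).2 hC) hβ0 hβ1 H s
  exact ⟨β₂, hβ₂0, hβ₂1, h, hh, H₂⟩

end WeightedOrlicz

theorem a2w_iff_general
    (n : ℕ) (Ω : Set (Rn n)) (hΩ : IsOpen Ω) (ω : Rn n → ℝ≥0∞)
    (φ : Rn n → ℝ≥0∞ → ℝ≥0∞) (hφ : IsWeakPhi Ω φ) :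
    A2w Ω ω φ ↔
      ∃ ψ : ℝ≥0∞ → ℝ≥0∞, IsWeakPhi0 ψ ∧ ∃ h : Rn n → ℝ≥0, MemL1wLinf Ω ω h ∧
        ∃ β : ℝ≥0, 0 < β ∧ β ≤ 1 ∧
          ∀ᵐ x ∂(volume : Measure (Rn n)), x ∈ Ω → ∀ t : ℝ≥0,
            (ψ t ≤ 1 → φ x (β * t) ≤ ψ t + h x) ∧
            (φ x t ≤ 1 → ψ (β * t) ≤ φ x t + h x) := by
  have hΩm := hΩ.measurableSet
  constructor
  · intro hA
    obtain ⟨ψ, hψ, h, hh, β, hβ0, hβ1, H⟩ := exists_isComparable_of_a2w hΩm hφ hA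
    exact ⟨ψ, hψ, h, hh, β, hβ0, hβ1, (ae_restrict_iff' hΩm).1 H⟩
  · rintro ⟨ψ, hψ, h, hh, β, hβ0, hβ1, H⟩
    exact a2w_of_isComparable hΩm hφ hψ hh hβ0 hβ1 ((ae_restrict_iff' hΩm).2 H)

/-- Characterization of (A2)_ω. -/
theorem a2w_iff
    (n : ℕ) (Ω : Set (Rn n)) (hΩ : IsOpen Ω) (ω : Rn n → ℝ≥0∞) (hw : IsWeight ω)
    (φ : Rn n → ℝ≥0∞ → ℝ≥0∞) (hφ : IsWeakPhi Ω φ) :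
    A2w Ω ω φ ↔
      ∃ ψ : ℝ≥0∞ → ℝ≥0∞, IsWeakPhi0 ψ ∧ ∃ h : Rn n → ℝ≥0, MemL1wLinf Ω ω h ∧
        ∃ β : ℝ≥0, 0 < β ∧ β ≤ 1 ∧
          ∀ᵐ x ∂(volume : Measure (Rn n)), x ∈ Ω → ∀ t : ℝ≥0,
            (ψ t ≤ 1 → φ x (β * t) ≤ ψ t + h x) ∧
            (φ x t ≤ 1 → ψ (β * t) ≤ φ x t + h x) :=
  a2w_iff_general n Ω hΩ ω φ hφ
end
end

section
/- Let Ω ⊆ ℝⁿ be open, let p : Ω → [1,∞] be measurable with 1/p ∈ P^log(Ω), and let ω ∈ A_∞. Then there exists a constant C > 0 such that ω(B)^{1/p_B^+ − 1/p_B^-} ≤ C for every open ball B ⊆ ℝⁿ. -/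
open MeasureTheory Metric Filter Set
open scoped ENNReal NNReal Topology

noncomputable section

/-!
For `ω ∈ A_q`, Hölder's inequality compares `B = B(z,r)` with the ball `B(z, r + |z| + 1) ⊇ B(0,1)`
and gives `ω(B) ≳ (r / (r + |z| + 1))^{nq}`. The exponent `1/p_B^+ - 1/p_B^-` is nonpositive, and
log-Hölder continuity (for small balls) together with log-Hölder decay (for balls far from the
origin) bound it below by `-ε` with `ε ≲ min (1 / log (e + 1/r)) (1 / log (e + dist(0, B)))`.
Only `ω(B) < 1` matters, and then `ω(B)^{-ε} ≲ exp (nq ε log ((r + |z| + 1) / r))`, which is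
bounded since `log ((r + |z| + 1) / r) = log (1 + 1/r) + log (1 + |z| / (r + 1))`.
-/

namespace Real

lemma one_le_log_exp_one_add {t : ℝ} (ht : 0 ≤ t) : 1 ≤ log (exp 1 + t) := by
  calc (1 : ℝ) = log (exp 1) := (log_exp 1).symm
    _ ≤ log (exp 1 + t) := log_le_log (exp_pos 1) (by linarith)

lemma log_exp_one_add_pos {t : ℝ} (ht : 0 ≤ t) : 0 < log (exp 1 + t) :=
  zero_lt_one.trans_le (one_le_log_exp_one_add ht)

lemma log_one_add_inv_le {r : ℝ} (hr : 0 < r) :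
    log (1 + 1 / r) ≤ log 2 + log (exp 1 + 1 / (2 * r)) := by
  have he : 1 ≤ exp 1 := one_le_exp zero_le_one
  rw [← log_mul two_ne_zero (by positivity)]
  refine log_le_log (by positivity) ?_
  rw [mul_add, mul_one_div, div_mul_cancel_left₀ two_ne_zero, one_div]
  linarith

lemma log_one_add_div_le {r s : ℝ} (hr : 0 < r) (hs : 0 ≤ s) :
    log (1 + s / (r + 1)) ≤ log 2 + log (exp 1 + max 0 (s - r)) := by
  have he : 2 ≤ exp 1 := by linarith [add_one_le_exp (1 : ℝ)]
  set m := max 0 (s - r)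
  have hm : 0 ≤ m := le_max_left _ _
  have hsm : s - r ≤ m := le_max_right _ _
  have hsr : s / (r + 1) ≤ 2 + 2 * m := by
    rw [div_le_iff₀ (by linarith)]
    nlinarith
  rw [← log_mul two_ne_zero (by positivity)]
  exact log_le_log (by positivity) (by linarith)

lemma div_mul_le_mul_one_add_log_two {c D A : ℝ} (hc : 0 ≤ c) (hD : 1 ≤ D)
    (hA : A ≤ log 2 + D) : c / D * A ≤ c * (1 + log 2) := by
  have hl2 : 0 ≤ log 2 := log_nonneg one_le_two
  calc c / D * A ≤ c / D * (log 2 + D) := by gcongr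
    _ = c + c * log 2 / D := by field_simp; ring
    _ ≤ c + c * log 2 := by gcongr; exact div_le_self (by positivity) hD
    _ = c * (1 + log 2) := by ring

lemma rpow_le_max_one_rpow_neg {W l ε t : ℝ} (hl : 0 < l) (hlW : l ≤ W) (ht : t ∈ Icc (-ε) 0) :
    W ^ t ≤ max 1 (l ^ (-ε)) := by
  rcases le_or_gt 1 W with hW | hW
  · exact (rpow_le_one_of_one_le_of_nonpos hW ht.2).trans (le_max_left _ _)
  · calc W ^ t ≤ W ^ (-ε) := rpow_le_rpow_of_exponent_ge (hl.trans_le hlW) hW.le ht.1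
      _ ≤ l ^ (-ε) := rpow_le_rpow_of_nonpos hl hlW (by linarith [ht.1, ht.2])
      _ ≤ max 1 (l ^ (-ε)) := le_max_right _ _

end Real

section EssentialBounds

variable {α : Type*} [MeasurableSpace α] {μ : Measure α}

lemma essSup_le_essInf_add {f : α → ℝ≥0∞} {s : Set α} {c : ℝ≥0∞} (hs : ∀ᵐ x ∂μ, x ∈ s)
    (h : ∀ x ∈ s, ∀ y ∈ s, f x ≤ f y + c) : essSup f μ ≤ essInf f μ + c := by
  have hy : ∀ y ∈ s, essSup f μ - c ≤ f y := fun y hy =>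
    tsub_le_iff_right.2 <| essSup_le_of_ae_le _ <| hs.mono fun x hx => h x hx y hy
  exact tsub_le_iff_right.1 <| le_essInf_of_ae_le _ <| hs.mono hy

lemma inv_essSup_sub_inv_essInf_mem_Icc {p : α → ℝ≥0∞} {s : Set α} {ε : ℝ} (hs : ∀ᵐ x ∂μ, x ∈ s)
    (hp : ∀ x ∈ s, 1 ≤ p x) (hε : 0 ≤ ε)
    (hosc : ∀ x ∈ s, ∀ y ∈ s, ((p x)⁻¹).toReal - ((p y)⁻¹).toReal ≤ ε) :
    ((essSup p μ)⁻¹).toReal - ((essInf p μ)⁻¹).toReal ∈ Icc (-ε) 0 := by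
  rcases eq_or_ne μ 0 with rfl | hμ
  · simp [hε]
  have : (ae μ).NeBot := ae_neBot.2 hμ
  have hu : ∀ x ∈ s, (p x)⁻¹ ≤ 1 := fun x hx => ENNReal.inv_le_one.2 (hp x hx)
  have hu_ne_top : ∀ x ∈ s, (p x)⁻¹ ≠ ∞ := fun x hx =>
    ne_top_of_le_ne_top ENNReal.one_ne_top (hu x hx)
  have hsup : (essSup p μ)⁻¹ = essInf (fun x => (p x)⁻¹) μ := OrderIso.invENNReal.essSup_apply p μ
  have hinf : (essInf p μ)⁻¹ = essSup (fun x => (p x)⁻¹) μ := OrderIso.invENNReal.essInf_apply p μ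
  have hle : essInf (fun x => (p x)⁻¹) μ ≤ essSup (fun x => (p x)⁻¹) μ := liminf_le_limsup
  have hsup_ne_top : essSup (fun x => (p x)⁻¹) μ ≠ ∞ :=
    ne_top_of_le_ne_top ENNReal.one_ne_top (essSup_le_of_ae_le _ (hs.mono hu))
  have hosc' : essSup (fun x => (p x)⁻¹) μ ≤ essInf (fun x => (p x)⁻¹) μ + ENNReal.ofReal ε := by
    refine essSup_le_essInf_add hs fun x hx y hy => ?_
    rw [← ENNReal.ofReal_toReal (hu_ne_top x hx), ← ENNReal.ofReal_toReal (hu_ne_top y hy),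
      ← ENNReal.ofReal_add ENNReal.toReal_nonneg hε]
    exact ENNReal.ofReal_le_ofReal (by linarith [hosc x hx y hy])
  have hinf_ne_top := ne_top_of_le_ne_top hsup_ne_top hle
  rw [hsup, hinf]
  constructor
  · have := ENNReal.toReal_mono (ENNReal.add_ne_top.2 ⟨hinf_ne_top, ENNReal.ofReal_ne_top⟩) hosc'
    rw [ENNReal.toReal_add hinf_ne_top ENNReal.ofReal_ne_top, ENNReal.toReal_ofReal hε] at this
    linarith
  · exact sub_nonpos.2 (ENNReal.toReal_mono hsup_ne_top hle)

end EssentialBounds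

section LogHolder

open Real

variable {n : ℕ}

/-- Bound on the oscillation over `B(z,r)` of a function with local and decay log-Hölder constants
`c₁`, `c₂`; `max 0 (‖z‖ - r)` bounds `|x|` from below on the ball. -/
def logHolderOsc (c₁ c₂ : ℝ) (z : Rn n) (r : ℝ) : ℝ :=
  min (c₁ / log (exp 1 + 1 / (2 * r))) (2 * c₂ / log (exp 1 + max 0 (‖z‖ - r)))

variable {c₁ c₂ : ℝ}

lemma logHolderOsc_nonneg (hc₁ : 0 ≤ c₁) (hc₂ : 0 ≤ c₂) (z : Rn n) {r : ℝ} (hr : 0 < r) :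
    0 ≤ logHolderOsc c₁ c₂ z r :=
  le_min (div_nonneg hc₁ (log_exp_one_add_pos (by positivity)).le)
    (div_nonneg (by positivity) (log_exp_one_add_pos (le_max_left _ _)).le)

lemma logHolderOsc_le (hc₁ : 0 ≤ c₁) (z : Rn n) {r : ℝ} (hr : 0 < r) :
    logHolderOsc c₁ c₂ z r ≤ c₁ :=
  (min_le_left _ _).trans (div_le_self hc₁ (one_le_log_exp_one_add (by positivity)))

lemma logHolderOsc_mul_log_le (hc₁ : 0 ≤ c₁) (hc₂ : 0 ≤ c₂) (z : Rn n) {r : ℝ} (hr : 0 < r) :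
    logHolderOsc c₁ c₂ z r * log ((r + ‖z‖ + 1) / r) ≤ (c₁ + 2 * c₂) * (1 + log 2) := by
  have hsplit : log ((r + ‖z‖ + 1) / r) = log (1 + 1 / r) + log (1 + ‖z‖ / (r + 1)) := by
    rw [← log_mul (by positivity) (by positivity)]
    congr 1
    field_simp
    ring
  have hlocal : logHolderOsc c₁ c₂ z r * log (1 + 1 / r) ≤ c₁ * (1 + log 2) := by
    have : 0 ≤ log (1 + 1 / r) := log_nonneg (le_add_of_nonneg_right (by positivity))
    exact (mul_le_mul_of_nonneg_right (min_le_left _ _) this).trans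
      (div_mul_le_mul_one_add_log_two hc₁ (one_le_log_exp_one_add (by positivity))
        (log_one_add_inv_le hr))
  have hdecay : logHolderOsc c₁ c₂ z r * log (1 + ‖z‖ / (r + 1)) ≤ 2 * c₂ * (1 + log 2) := by
    have : 0 ≤ log (1 + ‖z‖ / (r + 1)) := log_nonneg (le_add_of_nonneg_right (by positivity))
    exact (mul_le_mul_of_nonneg_right (min_le_right _ _) this).trans
      (div_mul_le_mul_one_add_log_two (by positivity) (one_le_log_exp_one_add (le_max_left _ _))
        (log_one_add_div_le hr (norm_nonneg z)))
  rw [hsplit, mul_add]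
  linarith

lemma sub_le_logHolderOsc {Ω : Set (Rn n)} {g : Rn n → ℝ} {ginf : ℝ} (hc₁ : 0 ≤ c₁) (hc₂ : 0 ≤ c₂)
    (hloc : ∀ x ∈ Ω, ∀ y ∈ Ω, |g x - g y| ≤ c₁ / log (exp 1 + 1 / dist x y))
    (hdecay : ∀ x ∈ Ω, |g x - ginf| ≤ c₂ / log (exp 1 + ‖x‖))
    {z : Rn n} {r : ℝ} {x y : Rn n} (hx : x ∈ ball z r ∩ Ω) (hy : y ∈ ball z r ∩ Ω) :
    g x - g y ≤ logHolderOsc c₁ c₂ z r := by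
  have hr : 0 < r := pos_of_mem_ball hx.1
  refine le_min ?_ ?_
  · rcases eq_or_ne x y with rfl | hxy
    · rw [sub_self]
      exact div_nonneg hc₁ (log_exp_one_add_pos (by positivity)).le
    have hdist : dist x y < 2 * r := by
      linarith [dist_triangle_right x y z, mem_ball.1 hx.1, mem_ball.1 hy.1]
    calc g x - g y ≤ c₁ / log (exp 1 + 1 / dist x y) := (le_abs_self _).trans (hloc x hx.2 y hy.2)
      _ ≤ c₁ / log (exp 1 + 1 / (2 * r)) := by
        have := dist_pos.2 hxy
        gcongr
        exact log_exp_one_add_pos (by positivity)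
  · have hbound : ∀ w ∈ ball z r ∩ Ω,
        |g w - ginf| ≤ c₂ / log (exp 1 + max 0 (‖z‖ - r)) := by
      intro w hw
      have hzw : ‖z‖ - r ≤ ‖w‖ := by
        linarith [norm_sub_norm_le z w, dist_eq_norm z w, dist_comm z w, mem_ball.1 hw.1]
      refine (hdecay w hw.2).trans ?_
      gcongr
      · exact log_exp_one_add_pos (le_max_left _ _)
      · exact max_le (norm_nonneg w) hzw
    rw [two_mul, add_div]
    linarith [le_abs_self (g x - ginf), neg_abs_le (g y - ginf), hbound x hx, hbound y hy]

lemma rpow_neg_logHolderOsc_le {κ N : ℝ} (hc₁ : 0 ≤ c₁) (hc₂ : 0 ≤ c₂)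
    (hκ : 0 < κ) (hκ1 : κ ≤ 1) (hN : 0 ≤ N) (z : Rn n) {r : ℝ} (hr : 0 < r) :
    (κ * (r / (r + ‖z‖ + 1)) ^ N) ^ (-logHolderOsc c₁ c₂ z r) ≤
      exp (N * ((c₁ + 2 * c₂) * (1 + log 2)) - c₁ * log κ) := by
  set ε := logHolderOsc c₁ c₂ z r
  have hR : 0 < r + ‖z‖ + 1 := by positivity
  have hlog : log (κ * (r / (r + ‖z‖ + 1)) ^ N) = log κ - N * log ((r + ‖z‖ + 1) / r) := by
    rw [log_mul hκ.ne' (rpow_pos_of_pos (div_pos hr hR) N).ne', log_rpow (by positivity),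
      ← inv_div, log_inv]
    ring
  rw [rpow_def_of_pos (by positivity), hlog]
  gcongr
  have hosc := logHolderOsc_mul_log_le hc₁ hc₂ z hr
  have hκ' : c₁ * log κ ≤ ε * log κ :=
    mul_le_mul_of_nonpos_right (logHolderOsc_le hc₁ z hr) (log_nonpos hκ.le hκ1)
  nlinarith [mul_le_mul_of_nonneg_left hosc hN]

end LogHolder

section Weights

variable {n : ℕ} {ω : Rn n → ℝ≥0∞}

lemma IsWeight.wSet_ball_ne_zero (hω : IsWeight ω) (z : Rn n) {r : ℝ} (hr : 0 < r) :
    wSet ω (ball z r) ≠ 0 := by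
  intro h
  rw [wSet, lintegral_eq_zero_iff hω.1] at h
  have : (ae (volume.restrict (ball z r))).NeBot :=
    ae_neBot.2 (by simpa [Measure.restrict_eq_zero] using (measure_ball_pos volume z hr).ne')
  obtain ⟨x, hx, hx0⟩ := ((ae_restrict_of_ae hω.2.1).and h).exists
  exact hx.1.ne' hx0

/-- Hölder's inequality with exponents `q` and `q' = q/(q-1)` applied to `1 = ω^{1/q} ω^{-1/q}`. -/
lemma IsWeight.volume_rpow_le_wSet_mul (hω : IsWeight ω) {q : ℝ} (hq : 1 < q) (E : Set (Rn n)) :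
    volume E ^ q ≤ wSet ω E * (∫⁻ y in E, ω y ^ (-(1 / (q - 1)))) ^ (q - 1) := by
  have hq0 : 0 < q := by linarith
  have hholder := ENNReal.lintegral_mul_le_Lp_mul_Lq (volume.restrict E)
    (Real.HolderConjugate.conjExponent hq) (hω.1.pow_const (1 / q)).aemeasurable
    (hω.1.pow_const (-(1 / q))).aemeasurable
  have hone : ∫⁻ y in E, ω y ^ (1 / q) * ω y ^ (-(1 / q)) = volume E := by
    rw [← setLIntegral_one]
    refine lintegral_congr_ae (ae_restrict_of_ae (hω.2.1.mono fun y hy => ?_))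
    dsimp only
    rw [← ENNReal.rpow_add _ _ hy.1.ne' hy.2.ne, add_neg_cancel, ENNReal.rpow_zero]
  have hfirst : ∫⁻ y in E, (ω y ^ (1 / q)) ^ q = wSet ω E := by
    simp_rw [← ENNReal.rpow_mul, one_div_mul_cancel hq0.ne', ENNReal.rpow_one, wSet]
  have hsecond : ∫⁻ y in E, (ω y ^ (-(1 / q))) ^ q.conjExponent =
      ∫⁻ y in E, ω y ^ (-(1 / (q - 1))) := by
    simp_rw [← ENNReal.rpow_mul]
    congr 3
    rw [Real.conjExponent]
    field_simp
  simp only [Pi.mul_apply, hone, hfirst, hsecond] at hholder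
  calc volume E ^ q
      ≤ (wSet ω E ^ (1 / q) * (∫⁻ y in E, ω y ^ (-(1 / (q - 1)))) ^ (1 / q.conjExponent)) ^ q :=
        ENNReal.rpow_le_rpow hholder hq0.le
    _ = wSet ω E * (∫⁻ y in E, ω y ^ (-(1 / (q - 1)))) ^ (q - 1) := by
        rw [ENNReal.mul_rpow_of_nonneg _ _ hq0.le, ← ENNReal.rpow_mul, ← ENNReal.rpow_mul,
          one_div_mul_cancel hq0.ne', ENNReal.rpow_one, Real.conjExponent]
        congr 2
        field_simp

end Weights

section Muckenhoupt

variable {n : ℕ} {ω : Rn n → ℝ≥0∞} {q : ℝ}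

lemma MuckenhouptAq.exists_volume_rpow_mul_wSet_le (hq : 1 < q) (hω : MuckenhouptAq q ω) :
    ∃ C : ℝ≥0∞, C ≠ ∞ ∧ ∀ (z : Rn n) (R : ℝ) (E : Set (Rn n)), 0 < R → E ⊆ ball z R →
      volume E ^ q * wSet ω (ball z R) ≤ C * wSet ω E * volume (ball z R) ^ q := by
  obtain ⟨hweight, C, hC, hA⟩ := hω
  refine ⟨C, hC, fun z R E hR hE => ?_⟩
  set X := ∫⁻ y in ball z R, ω y ^ (-(1 / (q - 1)))
  set Y := ∫⁻ y in E, ω y ^ (-(1 / (q - 1)))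
  have hvol_ne_zero : volume (ball z R) ^ q ≠ 0 :=
    (ENNReal.rpow_pos (measure_ball_pos volume z hR) measure_ball_lt_top.ne).ne'
  have hvol_ne_top : volume (ball z R) ^ q ≠ ∞ :=
    ENNReal.rpow_ne_top_of_nonneg (by linarith) measure_ball_lt_top.ne
  have hball : wSet ω (ball z R) * X ^ (q - 1) ≤ volume (ball z R) ^ q * C := by
    have h := hA z R hR
    rw [ENNReal.rpow_neg, mul_assoc] at h
    exact (ENNReal.inv_mul_le_iff hvol_ne_zero hvol_ne_top).1 h
  calc volume E ^ q * wSet ω (ball z R)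
      ≤ wSet ω E * Y ^ (q - 1) * wSet ω (ball z R) := by
        gcongr
        exact hweight.volume_rpow_le_wSet_mul hq E
    _ = wSet ω E * (wSet ω (ball z R) * Y ^ (q - 1)) := by ring
    _ ≤ wSet ω E * (wSet ω (ball z R) * X ^ (q - 1)) := by
        gcongr
        exact lintegral_mono_set hE
    _ ≤ wSet ω E * (volume (ball z R) ^ q * C) := by gcongr
    _ = C * wSet ω E * volume (ball z R) ^ q := by ring

lemma volume_ball_toReal (z : Rn n) {r : ℝ} (hr : 0 < r) :
    (volume (ball z r)).toReal = r ^ n * (volume (ball (0 : Rn n) 1)).toReal := by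
  rw [Measure.addHaar_ball_of_pos volume z hr, finrank_euclideanSpace_fin, ENNReal.toReal_mul,
    ENNReal.toReal_ofReal (by positivity)]

/-- Compare `B(z,r)` with `B(z, r + |z| + 1) ⊇ B(0,1)`. -/
lemma MuckenhouptAq.exists_wSet_ball_ge (hq : 1 < q) (hω : MuckenhouptAq q ω) :
    ∃ κ : ℝ, 0 < κ ∧ κ ≤ 1 ∧ ∀ (z : Rn n) (r : ℝ), 0 < r →
      κ * (r / (r + ‖z‖ + 1)) ^ ((n : ℝ) * q) ≤ (wSet ω (ball z r)).toReal := by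
  obtain ⟨C, hC, hcomp⟩ := hω.exists_volume_rpow_mul_wSet_le hq
  have hweight := hω.1
  set ω₀ := (wSet ω (ball (0 : Rn n) 1)).toReal
  have hω₀ : 0 < ω₀ :=
    ENNReal.toReal_pos (hweight.wSet_ball_ne_zero 0 one_pos) (hweight.2.2 0 1 one_pos)
  refine ⟨min 1 (ω₀ / (C.toReal + 1)), lt_min one_pos (by positivity), min_le_left _ _,
    fun z r hr => ?_⟩
  set R := r + ‖z‖ + 1 with hRdef
  have hR : 0 < R := by positivity
  have hrR : r ≤ R := by linarith [norm_nonneg z]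
  have hunit : ball (0 : Rn n) 1 ⊆ ball z R := ball_subset_ball' (by
    rw [dist_zero_left]
    linarith)
  have hv : 0 < (volume (ball (0 : Rn n) 1)).toReal :=
    ENNReal.toReal_pos (measure_ball_pos volume 0 one_pos).ne' measure_ball_lt_top.ne
  have hratio : (r / R) ^ ((n : ℝ) * q) =
      (volume (ball z r)).toReal ^ q / (volume (ball z R)).toReal ^ q := by
    rw [← Real.div_rpow (by positivity) (by positivity), volume_ball_toReal z hr,
      volume_ball_toReal z hR, Real.rpow_mul (by positivity), Real.rpow_natCast, div_pow]
    congr 1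
    field_simp
  have hreal := ENNReal.toReal_mono
    (ENNReal.mul_ne_top (ENNReal.mul_ne_top hC (hweight.2.2 z r hr))
      (ENNReal.rpow_ne_top_of_nonneg (by linarith) measure_ball_lt_top.ne))
    (hcomp z R (ball z r) hR (ball_subset_ball hrR))
  simp only [ENNReal.toReal_mul, ← ENNReal.toReal_rpow] at hreal
  have hVR : 0 < (volume (ball z R)).toReal ^ q := by
    rw [volume_ball_toReal z hR]
    positivity
  have hωR : ω₀ ≤ (wSet ω (ball z R)).toReal :=
    ENNReal.toReal_mono (hweight.2.2 z R hR) (lintegral_mono_set hunit)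
  have hkey : (wSet ω (ball z R)).toReal * (r / R) ^ ((n : ℝ) * q) ≤
      (C.toReal + 1) * (wSet ω (ball z r)).toReal := by
    rw [hratio, mul_div_assoc', div_le_iff₀ hVR]
    nlinarith [ENNReal.toReal_nonneg (a := wSet ω (ball z r))]
  calc min 1 (ω₀ / (C.toReal + 1)) * (r / R) ^ ((n : ℝ) * q)
      ≤ ω₀ / (C.toReal + 1) * (r / R) ^ ((n : ℝ) * q) := by gcongr; exact min_le_right _ _
    _ ≤ (wSet ω (ball z R)).toReal / (C.toReal + 1) * (r / R) ^ ((n : ℝ) * q) := by gcongr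
    _ ≤ (wSet ω (ball z r)).toReal := by
        rw [div_mul_eq_mul_div, div_le_iff₀ (by positivity), mul_comm _ (C.toReal + 1)]
        exact hkey

end Muckenhoupt

theorem wSet_ball_exponent_bound_general
    (n : ℕ) (Ω : Set (Rn n)) (hΩ : IsOpen Ω)
    (p : Rn n → ℝ≥0∞) (hp1 : ∀ x ∈ Ω, 1 ≤ p x)
    (hlog : PLog Ω p) (ω : Rn n → ℝ≥0∞) (hω : MuckenhouptAinfty ω) :
    ∃ C : ℝ≥0, 0 < C ∧ ∀ (z : Rn n) (r : ℝ), 0 < r →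
      wSet ω (ball z r) ^
          (((essSup p (volume.restrict (ball z r ∩ Ω)))⁻¹).toReal -
            ((essInf p (volume.restrict (ball z r ∩ Ω)))⁻¹).toReal) ≤ (C : ℝ≥0∞) := by
  obtain ⟨q, hq, hAq⟩ := hω
  obtain ⟨κ, hκ, hκ1, hlower⟩ := hAq.exists_wSet_ball_ge hq
  obtain ⟨⟨c₁, hc₁, hloc⟩, pinf, -, c₂, hc₂, hdecay⟩ := hlog
  set M := (n * q) * ((c₁ + 2 * c₂) * (1 + Real.log 2)) - c₁ * Real.log κ
  refine ⟨(max 1 (Real.exp M)).toNNReal, by positivity, fun z r hr => ?_⟩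
  have hW : wSet ω (ball z r) ≠ ∞ := hAq.1.2.2 z r hr
  have hexponent := inv_essSup_sub_inv_essInf_mem_Icc
    (ae_restrict_mem (μ := volume) (isOpen_ball.inter hΩ).measurableSet) (fun x hx => hp1 x hx.2)
    (logHolderOsc_nonneg hc₁.le hc₂.le z hr)
    (fun x hx y hy => sub_le_logHolderOsc hc₁.le hc₂.le hloc hdecay hx hy)
  rw [← ENNReal.ofReal_toReal hW, ENNReal.ofReal_rpow_of_pos
    (ENNReal.toReal_pos (hAq.1.wSet_ball_ne_zero z hr) hW)]
  refine ENNReal.ofReal_le_ofReal ((Real.rpow_le_max_one_rpow_neg (by positivity)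
    (hlower z r hr) hexponent).trans (max_le_max le_rfl ?_))
  exact rpow_neg_logHolderOsc_le hc₁.le hc₂.le hκ hκ1 (by positivity) z hr

/-- `ω(B)^{1/p_B^+ - 1/p_B^-} ≲ 1` for `ω ∈ A_∞` and `1/p ∈ P^log`. -/
theorem wSet_ball_exponent_bound
    (n : ℕ) (Ω : Set (Rn n)) (hΩ : IsOpen Ω)
    (p : Rn n → ℝ≥0∞) (hpm : Measurable p) (hp1 : ∀ x ∈ Ω, 1 ≤ p x)
    (hlog : PLog Ω p) (ω : Rn n → ℝ≥0∞) (hω : MuckenhouptAinfty ω) :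
    ∃ C : ℝ≥0, 0 < C ∧ ∀ (z : Rn n) (r : ℝ), 0 < r →
      wSet ω (ball z r) ^
          (((essSup p (volume.restrict (ball z r ∩ Ω)))⁻¹).toReal -
            ((essInf p (volume.restrict (ball z r ∩ Ω)))⁻¹).toReal) ≤ (C : ℝ≥0∞) :=
  wSet_ball_exponent_bound_general n Ω hΩ p hp1 hlog ω hω
end
end
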